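/- arXiv:0805.0728 — 5 statements merged into one kernel-verified Lean document; each statement's English description precedes it below -/
import Mathlib

section
/- Suppose there are constants C_h ≥ 1 and h ≥ 0 such that #σ^{-m}(x) ≤ C_h·e^{m·h} for all x ∈ X⁺ and m ∈ ℕ, and suppose 0 < τ⁻ ≤ T(x) ≤ τ⁺ < ∞ for all x and inf F ≥ h + ln 2. Set ω⁻ := (inf F − h)/τ⁺ > 0. Then for every x ∈ X⁺ and every t ∈ ℝ the series defining the renewal sum κ^x(t) converges, κ^x(t) > 0, and there exists a constant C > 0 (independent of x and t) such that κ^x(t) ≤ C·exp(−ω⁻·max(t,0)). -/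
variable {A : Type*}

/-- The one-sided subshift of finite type determined by the transition relation `R`. -/
def OneSubshift (R : A → A → Prop) : Set (ℕ → A) :=
  {x | ∀ i : ℕ, R (x i) (x (i + 1))}

/-- The left shift on one-sided sequences. -/
def shiftN (x : ℕ → A) : ℕ → A := fun i => x (i + 1)

/-- Birkhoff sums `S_m f = ∑_{i=0}^{m-1} f ∘ σ^i`. -/
noncomputable def birkhoffN (f : (ℕ → A) → ℝ) (m : ℕ) (x : ℕ → A) : ℝ :=
  ∑ i ∈ Finset.range m, f (shiftN^[i] x)

/-- The set `σ^{-m}(x)` of `m`-fold preimages of `x` inside the subshift. -/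
def preim (R : A → A → Prop) (m : ℕ) (x : ℕ → A) : Set (ℕ → A) :=
  {y ∈ OneSubshift R | shiftN^[m] y = x}

/-- The term `exp(−S_m F(y)) · 1[S_m T(y) ≥ t]` of the renewal sum. -/
noncomputable def renewalTerm (F T : (ℕ → A) → ℝ) (t : ℝ) (m : ℕ) (y : ℕ → A) : ℝ :=
  Real.exp (-(birkhoffN F m y)) * (if t ≤ birkhoffN T m y then 1 else 0)

/-- The renewal sum `κ^x(t)`. -/
noncomputable def kappa (R : A → A → Prop) (F T : (ℕ → A) → ℝ) (x : ℕ → A) (t : ℝ) : ℝ :=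
  ∑' p : (Σ m : ℕ, preim R m x), renewalTerm F T t p.1 p.2.val

/-! The level `m` of `κ^x(t)` has at most `C_h e^{m h}` terms, each at most `e^{-m inf F}`, and
it vanishes as soon as `m τ⁺ < t`, because then `S_m T < t`. So `κ^x(t)` is dominated by the
tail, from `m = ⌈max(t, 0)/τ⁺⌉`, of a geometric series with ratio `e^{-(inf F - h)} < 1`.
Positivity: by surjectivity `x` has a preimage of any level `m ≥ t/τ⁻`, and its term is
positive. -/

theorem tsum_le_of_le_geometric_of_eq_zero {g : ℕ → ℝ} {c r : ℝ} {M : ℕ}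
    (hr₀ : 0 ≤ r) (hr₁ : r < 1) (hg₀ : ∀ m, 0 ≤ g m) (hg : ∀ m, g m ≤ c * r ^ m)
    (hzero : ∀ m < M, g m = 0) :
    Summable g ∧ ∑' m, g m ≤ c * r ^ M / (1 - r) := by
  have hgeom := summable_geometric_of_lt_one hr₀ hr₁
  have hsum : Summable g := .of_nonneg_of_le hg₀ hg (hgeom.mul_left c)
  refine ⟨hsum, ?_⟩
  have hhead : ∑ m ∈ Finset.range M, g m = 0 :=
    Finset.sum_eq_zero fun m hm => hzero m (Finset.mem_range.mp hm)
  calc ∑' m, g m = ∑' k, g (k + M) := by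
        rw [← hsum.sum_add_tsum_nat_add M, hhead, zero_add]
    _ ≤ ∑' k, c * r ^ M * r ^ k :=
        Summable.tsum_le_tsum (fun k => by rw [mul_assoc, ← pow_add, add_comm]; exact hg _)
          ((summable_nat_add_iff M).mpr hsum) (hgeom.mul_left _)
    _ = c * r ^ M / (1 - r) := by
        rw [tsum_mul_left, tsum_geometric_of_lt_one hr₀ hr₁, div_eq_mul_inv]

noncomputable def kappaLevel (R : A → A → Prop) (F T : (ℕ → A) → ℝ) (x : ℕ → A) (t : ℝ)
    (m : ℕ) : ℝ :=
  ∑' y : preim R m x, renewalTerm F T t m y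

section Renewal

variable {R : A → A → Prop}

theorem shiftN_mem {x : ℕ → A} (hx : x ∈ OneSubshift R) : shiftN x ∈ OneSubshift R :=
  fun i => hx (i + 1)

theorem iterate_shiftN_mem {x : ℕ → A} (hx : x ∈ OneSubshift R) (i : ℕ) :
    shiftN^[i] x ∈ OneSubshift R := by
  induction i with
  | zero => exact hx
  | succ n ih => rw [Function.iterate_succ_apply']; exact shiftN_mem ih

theorem birkhoffN_le {f : (ℕ → A) → ℝ} {c : ℝ} (hc : ∀ z ∈ OneSubshift R, f z ≤ c)
    {y : ℕ → A} (hy : y ∈ OneSubshift R) (m : ℕ) : birkhoffN f m y ≤ m * c := by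
  simpa [birkhoffN] using
    Finset.sum_le_sum fun i (_ : i ∈ Finset.range m) => hc _ (iterate_shiftN_mem hy i)

theorem le_birkhoffN {f : (ℕ → A) → ℝ} {c : ℝ} (hc : ∀ z ∈ OneSubshift R, c ≤ f z)
    {y : ℕ → A} (hy : y ∈ OneSubshift R) (m : ℕ) : m * c ≤ birkhoffN f m y := by
  simpa [birkhoffN] using
    Finset.sum_le_sum fun i (_ : i ∈ Finset.range m) => hc _ (iterate_shiftN_mem hy i)

theorem preim_nonempty (hsurj : ∀ x ∈ OneSubshift R, ∃ y ∈ OneSubshift R, shiftN y = x)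
    {x : ℕ → A} (hx : x ∈ OneSubshift R) (m : ℕ) : (preim R m x).Nonempty := by
  induction m with
  | zero => exact ⟨x, hx, rfl⟩
  | succ n ih =>
    obtain ⟨y, hyX, rfl⟩ := ih
    obtain ⟨z, hzX, rfl⟩ := hsurj y hyX
    exact ⟨z, hzX, Function.iterate_succ_apply _ _ _⟩

variable {F T : (ℕ → A) → ℝ} {t : ℝ}

theorem renewalTerm_nonneg (m : ℕ) (y : ℕ → A) : 0 ≤ renewalTerm F T t m y := by
  unfold renewalTerm; positivity

theorem renewalTerm_le {α : ℝ} (hF : ∀ z ∈ OneSubshift R, α ≤ F z) {y : ℕ → A}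
    (hy : y ∈ OneSubshift R) (m : ℕ) : renewalTerm F T t m y ≤ Real.exp (-(m * α)) := by
  unfold renewalTerm
  calc _ ≤ Real.exp (-birkhoffN F m y) * 1 := by gcongr; split_ifs <;> norm_num
    _ ≤ Real.exp (-(m * α)) := by rw [mul_one]; gcongr; exact le_birkhoffN hF hy m

theorem renewalTerm_eq_zero {τ : ℝ} (hT : ∀ z ∈ OneSubshift R, T z ≤ τ) {y : ℕ → A}
    (hy : y ∈ OneSubshift R) {m : ℕ} (hm : m * τ < t) : renewalTerm F T t m y = 0 := by
  have : ¬ t ≤ birkhoffN T m y := fun ht => (ht.trans (birkhoffN_le hT hy m)).not_gt hm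
  simp [renewalTerm, this]

theorem renewalTerm_pos {τ : ℝ} (hT : ∀ z ∈ OneSubshift R, τ ≤ T z) {y : ℕ → A}
    (hy : y ∈ OneSubshift R) {m : ℕ} (hm : t ≤ m * τ) : 0 < renewalTerm F T t m y := by
  have : t ≤ birkhoffN T m y := hm.trans (le_birkhoffN hT hy m)
  simpa [renewalTerm, this] using Real.exp_pos _

variable {x : ℕ → A}

theorem kappaLevel_nonneg (m : ℕ) : 0 ≤ kappaLevel R F T x t m :=
  tsum_nonneg fun _ => renewalTerm_nonneg _ _

theorem kappaLevel_le {α Ch h : ℝ} (hF : ∀ z ∈ OneSubshift R, α ≤ F z) {m : ℕ}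
    (hfin : (preim R m x).Finite) (hcard : (Nat.card (preim R m x) : ℝ) ≤ Ch * Real.exp (m * h)) :
    kappaLevel R F T x t m ≤ Ch * Real.exp (-(α - h)) ^ m := by
  have := hfin.fintype
  calc kappaLevel R F T x t m = ∑ y : preim R m x, renewalTerm F T t m y := tsum_fintype _
    _ ≤ ∑ _y : preim R m x, Real.exp (-(m * α)) :=
        Finset.sum_le_sum fun y _ => renewalTerm_le hF y.2.1 m
    _ = Nat.card (preim R m x) * Real.exp (-(m * α)) := by
        simp [Nat.card_eq_fintype_card]
    _ ≤ Ch * Real.exp (m * h) * Real.exp (-(m * α)) := by gcongr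
    _ = Ch * Real.exp (-(α - h)) ^ m := by
        rw [mul_assoc, ← Real.exp_add, ← Real.exp_nat_mul]; ring_nf

theorem kappaLevel_eq_zero {τ : ℝ} (hT : ∀ z ∈ OneSubshift R, T z ≤ τ) {m : ℕ}
    (hm : m * τ < t) : kappaLevel R F T x t m = 0 := by
  simp [kappaLevel, fun y : preim R m x => renewalTerm_eq_zero (F := F) hT y.2.1 hm]

theorem summable_renewalTerm_iff (hfin : ∀ m, (preim R m x).Finite) :
    Summable (fun p : (Σ m : ℕ, preim R m x) => renewalTerm F T t p.1 p.2.val) ↔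
      Summable (kappaLevel R F T x t) := by
  rw [summable_sigma_of_nonneg fun p => renewalTerm_nonneg _ _]
  exact and_iff_right fun m => have := (hfin m).to_subtype; Summable.of_finite

theorem summable_renewalTerm_and_kappa_le {α Ch h τ : ℝ} (hCh : 0 ≤ Ch) (hαh : h < α)
    (hτ : 0 < τ) (hF : ∀ z ∈ OneSubshift R, α ≤ F z) (hT : ∀ z ∈ OneSubshift R, T z ≤ τ)
    (hfin : ∀ m, (preim R m x).Finite)
    (hcard : ∀ m : ℕ, (Nat.card (preim R m x) : ℝ) ≤ Ch * Real.exp (m * h)) :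
    Summable (fun p : (Σ m : ℕ, preim R m x) => renewalTerm F T t p.1 p.2.val) ∧
      kappa R F T x t ≤
        Ch / (1 - Real.exp (-(α - h))) * Real.exp (-((α - h) / τ) * max t 0) := by
  set M := ⌈max t 0 / τ⌉₊
  have hr₁ : Real.exp (-(α - h)) < 1 := Real.exp_lt_one_iff.mpr (by linarith)
  have hzero : ∀ m < M, kappaLevel R F T x t m = 0 := fun m hm => by
    have hmτ := (lt_div_iff₀ hτ).mp (Nat.lt_ceil.mp hm)
    exact kappaLevel_eq_zero hT ((lt_max_iff.mp hmτ).resolve_right (not_lt.mpr (by positivity)))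
  obtain ⟨hsum, hle⟩ := tsum_le_of_le_geometric_of_eq_zero (Real.exp_pos _).le hr₁
    kappaLevel_nonneg (fun m => kappaLevel_le hF (hfin m) (hcard m)) hzero
  have hsig := (summable_renewalTerm_iff hfin).mpr hsum
  have hdecay : Real.exp (-(α - h)) ^ M ≤ Real.exp (-((α - h) / τ) * max t 0) := by
    rw [← Real.exp_nat_mul, Real.exp_le_exp, mul_neg, neg_mul, neg_le_neg_iff, div_mul_comm]
    gcongr
    exact Nat.le_ceil _
  refine ⟨hsig, ?_⟩
  calc kappa R F T x t = ∑' m, kappaLevel R F T x t m := hsig.tsum_sigma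
    _ ≤ Ch * Real.exp (-(α - h)) ^ M / (1 - Real.exp (-(α - h))) := hle
    _ ≤ Ch / (1 - Real.exp (-(α - h))) * Real.exp (-((α - h) / τ) * max t 0) := by
        rw [mul_div_right_comm]
        gcongr

theorem kappa_pos (hsurj : ∀ x ∈ OneSubshift R, ∃ y ∈ OneSubshift R, shiftN y = x)
    (hx : x ∈ OneSubshift R) {τ : ℝ} (hτ : 0 < τ) (hT : ∀ z ∈ OneSubshift R, τ ≤ T z)
    (hsig : Summable (fun p : (Σ m : ℕ, preim R m x) => renewalTerm F T t p.1 p.2.val)) :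
    0 < kappa R F T x t := by
  have hm : t ≤ ⌈t / τ⌉₊ * τ := (div_le_iff₀ hτ).mp (Nat.le_ceil _)
  obtain ⟨y, hy⟩ := preim_nonempty hsurj hx ⌈t / τ⌉₊
  exact (renewalTerm_pos hT hy.1 hm).trans_le
    (hsig.le_tsum ⟨_, y, hy⟩ fun p _ => renewalTerm_nonneg _ _)

end Renewal

theorem stmt1_general (R : A → A → Prop)
    (hXne : (OneSubshift R).Nonempty)
    (hsurj : ∀ x ∈ OneSubshift R, ∃ y ∈ OneSubshift R, shiftN y = x)
    (F T : (ℕ → A) → ℝ) (Ch h : ℝ) (hCh : 1 ≤ Ch) (hh : 0 ≤ h)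
    (hfin : ∀ (m : ℕ) (x : ℕ → A), (preim R m x).Finite)
    (hcard : ∀ (m : ℕ), ∀ x ∈ OneSubshift R,
      (Nat.card (preim R m x) : ℝ) ≤ Ch * Real.exp (m * h))
    (τm τp : ℝ) (hτm : 0 < τm)
    (hT : ∀ x ∈ OneSubshift R, τm ≤ T x ∧ T x ≤ τp)
    (hF : h + Real.log 2 ≤ sInf (F '' OneSubshift R)) :
    0 < (sInf (F '' OneSubshift R) - h) / τp ∧
    (∀ x ∈ OneSubshift R, ∀ t : ℝ,
      Summable (fun p : (Σ m : ℕ, preim R m x) => renewalTerm F T t p.1 p.2.val) ∧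
      0 < kappa R F T x t) ∧
    ∃ C > 0, ∀ x ∈ OneSubshift R, ∀ t : ℝ,
      kappa R F T x t ≤
        C * Real.exp (-((sInf (F '' OneSubshift R) - h) / τp) * max t 0) := by
  set α := sInf (F '' OneSubshift R)
  have hlog : 0 < Real.log 2 := Real.log_pos one_lt_two
  obtain ⟨x₀, hx₀⟩ := hXne
  have hτp : 0 < τp := hτm.trans_le ((hT x₀ hx₀).1.trans (hT x₀ hx₀).2)
  -- `sInf` of a set unbounded below is `0`, which contradicts `h + log 2 ≤ sInf`.
  have hbdd : BddBelow (F '' OneSubshift R) := by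
    by_contra hunb
    rw [show α = 0 from Real.sInf_of_not_bddBelow hunb] at hF
    linarith
  have hαF : ∀ z ∈ OneSubshift R, α ≤ F z := fun z hz => csInf_le hbdd ⟨z, hz, rfl⟩
  have hαh : h < α := by linarith
  have hbound := fun x (hx : x ∈ OneSubshift R) (t : ℝ) =>
    summable_renewalTerm_and_kappa_le (t := t) (zero_le_one.trans hCh) hαh hτp hαF
      (fun z hz => (hT z hz).2) (hfin · x) (hcard · x hx)
  refine ⟨div_pos (sub_pos.mpr hαh) hτp,
    fun x hx t => ⟨(hbound x hx t).1, kappa_pos hsurj hx hτm (fun z hz => (hT z hz).1)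
      (hbound x hx t).1⟩,
    _, ?_, fun x hx t => (hbound x hx t).2⟩
  exact div_pos (by linarith) (sub_pos.mpr (Real.exp_lt_one_iff.mpr (by linarith)))

/-- Under the counting bound `#σ^{-m}(x) ≤ C_h e^{m h}`, the bounds
`0 < τ⁻ ≤ T ≤ τ⁺` and `inf F ≥ h + ln 2`, with `ω⁻ := (inf F − h)/τ⁺ > 0`,
the renewal sum converges, is positive, and `κ^x(t) ≤ C · exp(−ω⁻ · max(t,0))`
for a constant `C` independent of `x` and `t`. -/
theorem stmt1 [Fintype A] [Nonempty A] (R : A → A → Prop)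
    (hXne : (OneSubshift R).Nonempty)
    (hsurj : ∀ x ∈ OneSubshift R, ∃ y ∈ OneSubshift R, shiftN y = x)
    (F T : (ℕ → A) → ℝ) (Ch h : ℝ) (hCh : 1 ≤ Ch) (hh : 0 ≤ h)
    (hfin : ∀ (m : ℕ) (x : ℕ → A), (preim R m x).Finite)
    (hcard : ∀ (m : ℕ), ∀ x ∈ OneSubshift R,
      (Nat.card (preim R m x) : ℝ) ≤ Ch * Real.exp (m * h))
    (τm τp : ℝ) (hτm : 0 < τm)
    (hT : ∀ x ∈ OneSubshift R, τm ≤ T x ∧ T x ≤ τp)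
    (hF : h + Real.log 2 ≤ sInf (F '' OneSubshift R)) :
    0 < (sInf (F '' OneSubshift R) - h) / τp ∧
    (∀ x ∈ OneSubshift R, ∀ t : ℝ,
      Summable (fun p : (Σ m : ℕ, preim R m x) => renewalTerm F T t p.1 p.2.val) ∧
      0 < kappa R F T x t) ∧
    ∃ C > 0, ∀ x ∈ OneSubshift R, ∀ t : ℝ,
      kappa R F T x t ≤
        C * Real.exp (-((sInf (F '' OneSubshift R) - h) / τp) * max t 0) :=
  stmt1_general R hXne hsurj F T Ch h hCh hh hfin hcard τm τp hτm hT hF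
end

section
/- For every constant C > 0 there exist E_0 > 0 and C' > 0 with the following property. For E > E_0 put δ_T := C·E^{−3/2}, δ_F := C·E^{−1}, and define perturbed matrices M_E^+(β) with entries exp(−(F̃_E + 2·ln(1+δ_F)) + β·(T̃_E − δ_T)) on composable pairs (0 otherwise) and M_E^-(β) with entries exp(−(F̃_E + 2·ln(1−δ_F)) + β·(T̃_E + δ_T)) on composable pairs (0 otherwise). Then for all E > E_0 the equations 'spectral radius of M_E^±(β) equals 1' have unique solutions β̃_E^±, the equation 'spectral radius of M_E(β) equals 1' has a unique solution β̃_E, and |β̃_E^± − β̃_E| ≤ C'·β̃_E/E, i.e. β̃_E^± = β̃_E·(1 + O(1/E)). -/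
/-!
The perturbed matrices are scalar multiples of the unperturbed one,
`M_E^±(β) = exp (-(2 ln (1 ± δ_F) ± δ_T β)) • M_E(β)`, so all three equations read
`P(β) = r + s β` for the pressure `P(β) = log ρ(M_E(β))`. Entrywise
`M_E(β + h) = exp (h T̃_E) • M_E(β)`, and the spectral radius is monotone on nonnegative
matrices (Gelfand's formula), so `t h ≤ P(β + h) - P(β) ≤ t' h` for `h ≥ 0`, where
`[t, t'] = [d_min / (2√(2E)), 2 d_max / √(2E)]` bounds the times `T̃_E` once `E` is large.
Hence `P` is an increasing bi-Lipschitz bijection of `ℝ`: each equation has exactly one root,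
and the roots differ by at most `2 (|r| + |s| β̃_E) / t`. Since `F̃_E ≥ 2 ln E + O(1)`, `P(0) ≤ -1`
for large `E`, whence `β̃_E ≥ 1 / t'` is of order `√E`; with `r = O(1/E)` and
`s = O(E^{-3/2})` this is `O(β̃_E / E)`.
-/

open scoped ENNReal

/-- Configuration space `ℝ³`. -/
abbrev E3 := EuclideanSpace ℝ (Fin 3)

/-- The alphabet `A = {(i,j) : i ≠ j}`. -/
abbrev MolAlphabet (n : ℕ) := {p : Fin n × Fin n // p.1 ≠ p.2}

/-- Two symbols `(i,j)` and `(k,l)` are composable iff `j = k`. -/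
abbrev Composable {n : ℕ} (k₀ k₁ : MolAlphabet n) : Prop := k₀.1.2 = k₁.1.1

/-- The spectral radius of a real square matrix (computed over `ℂ`). -/
noncomputable def specRad {A : Type*} [Fintype A] [DecidableEq A]
    (M : Matrix A A ℝ) : ℝ≥0∞ :=
  spectralRadius ℂ (M.map Complex.ofReal)

/-- `f((i,j),(j,l)) = 2 d_{i,j} cos²(α(i,j,l)/2) / (−Z_j)`. -/
noncomputable def molF {n : ℕ} (q : Fin n → E3) (Z : Fin n → ℝ)
    (k₀ k₁ : MolAlphabet n) : ℝ :=
  2 * ‖q k₀.1.1 - q k₀.1.2‖ *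
    Real.cos (InnerProductGeometry.angle (q k₀.1.1 - q k₀.1.2)
      (q k₁.1.2 - q k₀.1.2) / 2) ^ 2 / (-(Z k₀.1.2))

/-- The approximate Poincaré time `T̃_E(k₀,k₁) = d̄/√(2E) − Z_j ln E/(2E)^{3/2}`. -/
noncomputable def molT {n : ℕ} (q : Fin n → E3) (Z : Fin n → ℝ) (E : ℝ)
    (k₀ k₁ : MolAlphabet n) : ℝ :=
  (‖q k₀.1.1 - q k₀.1.2‖ + ‖q k₀.1.2 - q k₁.1.2‖) / 2 / Real.sqrt (2 * E) -
    Z k₀.1.2 * Real.log E / (2 * E) ^ ((3 : ℝ) / 2)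

/-- The approximate unstable Jacobian `F̃_E(k₀,k₁) = 2 ln(2E |f(k₀,k₁)| / d_{i,j})`. -/
noncomputable def molFE {n : ℕ} (q : Fin n → E3) (Z : Fin n → ℝ) (E : ℝ)
    (k₀ k₁ : MolAlphabet n) : ℝ :=
  2 * Real.log (2 * E * |molF q Z k₀ k₁| / ‖q k₀.1.1 - q k₀.1.2‖)

/-- The weighted transfer matrix `M_E(β)`. -/
noncomputable def molM {n : ℕ} (q : Fin n → E3) (Z : Fin n → ℝ) (E β : ℝ) :
    Matrix (MolAlphabet n) (MolAlphabet n) ℝ :=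
  Matrix.of fun k₀ k₁ =>
    if Composable k₀ k₁ then
      Real.exp (-(molFE q Z E k₀ k₁) + β * molT q Z E k₀ k₁)
    else 0

/-- The perturbed transfer matrix `M_E^+(β)`, with `δ_T = C E^{-3/2}`, `δ_F = C E^{-1}`:
entries `exp(−(F̃_E + 2 ln(1+δ_F)) + β (T̃_E − δ_T))` on composable pairs. -/
noncomputable def molMp {n : ℕ} (q : Fin n → E3) (Z : Fin n → ℝ) (C E β : ℝ) :
    Matrix (MolAlphabet n) (MolAlphabet n) ℝ :=
  Matrix.of fun k₀ k₁ =>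
    if Composable k₀ k₁ then
      Real.exp (-(molFE q Z E k₀ k₁ + 2 * Real.log (1 + C * E ^ (-(1 : ℝ)))) +
        β * (molT q Z E k₀ k₁ - C * E ^ (-(3 : ℝ) / 2)))
    else 0

/-- The perturbed transfer matrix `M_E^-(β)`:
entries `exp(−(F̃_E + 2 ln(1−δ_F)) + β (T̃_E + δ_T))` on composable pairs. -/
noncomputable def molMm {n : ℕ} (q : Fin n → E3) (Z : Fin n → ℝ) (C E β : ℝ) :
    Matrix (MolAlphabet n) (MolAlphabet n) ℝ :=
  Matrix.of fun k₀ k₁ =>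
    if Composable k₀ k₁ then
      Real.exp (-(molFE q Z E k₀ k₁ + 2 * Real.log (1 - C * E ^ (-(1 : ℝ)))) +
        β * (molT q Z E k₀ k₁ + C * E ^ (-(3 : ℝ) / 2)))
    else 0

open scoped NNReal
open Filter Topology

namespace spectrum

theorem coe_le_spectralRadius_of_forall_pow_le {A : Type*} [NormedRing A] [NormedAlgebra ℂ A]
    [CompleteSpace A] (a : A) (c : ℝ≥0) (h : ∀ k : ℕ, c ^ k ≤ ‖a ^ k‖₊) :
    (c : ℝ≥0∞) ≤ spectralRadius ℂ a := by
  refine ge_of_tendsto (pow_nnnorm_pow_one_div_tendsto_nhds_spectralRadius a) ?_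
  filter_upwards [eventually_ge_atTop 1] with k hk
  calc (c : ℝ≥0∞) = ((c ^ k : ℝ≥0) : ℝ≥0∞) ^ (1 / k : ℝ) := by
        rw [ENNReal.coe_pow, ← ENNReal.rpow_natCast, ← ENNReal.rpow_mul,
          mul_one_div_cancel (by positivity), ENNReal.rpow_one]
    _ ≤ (‖a ^ k‖₊ : ℝ≥0∞) ^ (1 / k : ℝ) := by gcongr; exact h k

theorem spectralRadius_smul {A : Type*} [NormedRing A] [NormedAlgebra ℂ A] [CompleteSpace A]
    (c : ℂ) (a : A) : spectralRadius ℂ (c • a) = ‖c‖₊ * spectralRadius ℂ a := by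
  refine tendsto_nhds_unique
    ((pow_nnnorm_pow_one_div_tendsto_nhds_spectralRadius (c • a)).congr' ?_)
    (ENNReal.Tendsto.const_mul (pow_nnnorm_pow_one_div_tendsto_nhds_spectralRadius a)
      (Or.inr ENNReal.coe_ne_top))
  filter_upwards [eventually_ge_atTop 1] with k hk
  rw [smul_pow, nnnorm_smul, nnnorm_pow, ENNReal.coe_mul,
    ENNReal.mul_rpow_of_nonneg _ _ (by positivity), ENNReal.coe_pow, ← ENNReal.rpow_natCast,
    ← ENNReal.rpow_mul, mul_one_div_cancel (by positivity), ENNReal.rpow_one]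

theorem spectralRadius_pow {A : Type*} [Ring A] [Algebra ℂ A]
    (a : A) {n : ℕ} (hn : n ≠ 0) : spectralRadius ℂ (a ^ n) = spectralRadius ℂ a ^ n := by
  refine le_antisymm ?_ (spectralRadius_pow_le a n hn)
  rw [spectralRadius, map_pow_of_pos a (Nat.pos_of_ne_zero hn)]
  refine iSup₂_le ?_
  rintro _ ⟨y, hy, rfl⟩
  rw [nnnorm_pow, ENNReal.coe_pow]
  gcongr
  exact le_iSup₂ (f := fun (x : ℂ) (_ : x ∈ spectrum ℂ a) => (‖x‖₊ : ℝ≥0∞)) y hy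

end spectrum

namespace Matrix

variable {ι : Type*} [Fintype ι] [DecidableEq ι]

theorem pow_apply_le_pow_apply {M N : Matrix ι ι ℝ} (hM : ∀ i j, 0 ≤ M i j)
    (hMN : ∀ i j, M i j ≤ N i j) (k : ℕ) (i j : ι) : (M ^ k) i j ≤ (N ^ k) i j := by
  induction k generalizing j with
  | zero => rfl
  | succ k ih =>
    rw [pow_succ, pow_succ, mul_apply, mul_apply]
    exact Finset.sum_le_sum fun l _ => mul_le_mul (ih l) (hMN l j) (hM l j)
      (pow_apply_nonneg (fun i j ↦ (hM i j).trans (hMN i j)) k i l)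

theorem apply_self_pow_le_pow_apply_self {M : Matrix ι ι ℝ} (hM : ∀ i j, 0 ≤ M i j)
    (a : ι) (k : ℕ) : M a a ^ k ≤ (M ^ k) a a := by
  induction k with
  | zero => simp
  | succ k ih =>
    rw [pow_succ, pow_succ, mul_apply]
    exact (mul_le_mul_of_nonneg_right ih (hM a a)).trans <|
      Finset.single_le_sum (f := fun l => (M ^ k) a l * M l a)
        (fun l _ => mul_nonneg (pow_apply_nonneg hM k a l) (hM l a)) (Finset.mem_univ a)

theorem map_ofReal_pow (M : Matrix ι ι ℝ) (k : ℕ) :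
    (M ^ k).map ((↑) : ℝ → ℂ) = M.map (↑) ^ k :=
  Matrix.map_pow M Complex.ofRealHom k

section LinftyOpNorm

attribute [local instance] Matrix.linftyOpNormedRing Matrix.linftyOpNormedAlgebra

theorem linfty_opNNNorm_map_ofReal (M : Matrix ι ι ℝ) :
    ‖M.map ((↑) : ℝ → ℂ)‖₊ = Finset.univ.sup fun i => ∑ j, ‖M i j‖₊ := by
  simp [linfty_opNNNorm_def]

theorem pow_nnnorm_pow_one_div_tendsto_specRad (M : Matrix ι ι ℝ) :
    Tendsto (fun k : ℕ => (‖(M ^ k).map ((↑) : ℝ → ℂ)‖₊ : ℝ≥0∞) ^ (1 / k : ℝ)) atTop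
      (𝓝 (specRad M)) := by
  refine (spectrum.pow_nnnorm_pow_one_div_tendsto_nhds_spectralRadius _).congr fun k => ?_
  rw [map_ofReal_pow]

theorem specRad_le_specRad {M N : Matrix ι ι ℝ} (hM : ∀ i j, 0 ≤ M i j)
    (hMN : ∀ i j, M i j ≤ N i j) : specRad M ≤ specRad N := by
  refine le_of_tendsto_of_tendsto' (pow_nnnorm_pow_one_div_tendsto_specRad M)
    (pow_nnnorm_pow_one_div_tendsto_specRad N) fun k => ?_
  gcongr
  rw [linfty_opNNNorm_map_ofReal, linfty_opNNNorm_map_ofReal]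
  refine Finset.sup_mono_fun fun i _ => Finset.sum_le_sum fun j _ => ?_
  rw [Real.nnnorm_of_nonneg (pow_apply_nonneg hM k i j), Real.nnnorm_of_nonneg
    ((pow_apply_nonneg hM k i j).trans (pow_apply_le_pow_apply hM hMN k i j))]
  exact pow_apply_le_pow_apply hM hMN k i j

theorem ofReal_apply_self_le_specRad {M : Matrix ι ι ℝ} (hM : ∀ i j, 0 ≤ M i j) (a : ι) :
    ENNReal.ofReal (M a a) ≤ specRad M := by
  refine spectrum.coe_le_spectralRadius_of_forall_pow_le _ _ fun k => ?_
  rw [← Real.toNNReal_pow (hM a a), ← map_ofReal_pow, linfty_opNNNorm_map_ofReal]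
  calc (M a a ^ k).toNNReal ≤ ((M ^ k) a a).toNNReal :=
        Real.toNNReal_le_toNNReal (apply_self_pow_le_pow_apply_self hM a k)
    _ = ‖(M ^ k) a a‖₊ := Real.toNNReal_eq_nnnorm_of_nonneg (pow_apply_nonneg hM k a a)
    _ ≤ ∑ j, ‖(M ^ k) a j‖₊ :=
      Finset.single_le_sum (f := fun j => ‖(M ^ k) a j‖₊) (fun _ _ => zero_le) (Finset.mem_univ a)
    _ ≤ _ := Finset.le_sup (f := fun i => ∑ j, ‖(M ^ k) i j‖₊) (Finset.mem_univ a)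

theorem specRad_le_card_mul [Nonempty ι] {M : Matrix ι ι ℝ} {c : ℝ}
    (hM : ∀ i j, 0 ≤ M i j) (hc : ∀ i j, M i j ≤ c) :
    specRad M ≤ ENNReal.ofReal (Fintype.card ι * c) := by
  refine (spectrum.spectralRadius_le_nnnorm (𝕜 := ℂ) _).trans ?_
  rw [linfty_opNNNorm_map_ofReal, ENNReal.ofReal_mul (Nat.cast_nonneg _), ENNReal.ofReal_natCast,
    ENNReal.ofReal, ← ENNReal.coe_natCast, ← ENNReal.coe_mul, ENNReal.coe_le_coe]
  refine Finset.sup_le fun i _ => ?_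
  calc ∑ j, ‖M i j‖₊ ≤ ∑ _j : ι, c.toNNReal := Finset.sum_le_sum fun j _ => by
        rw [← Real.toNNReal_eq_nnnorm_of_nonneg (hM i j)]
        exact Real.toNNReal_le_toNNReal (hc i j)
    _ = Fintype.card ι * c.toNNReal := by simp

theorem specRad_smul (c : ℝ) (M : Matrix ι ι ℝ) :
    specRad (c • M) = ‖c‖₊ * specRad M := by
  have : (c • M).map ((↑) : ℝ → ℂ) = (c : ℂ) • M.map (↑) := by ext; simp
  rw [specRad, this, spectrum.spectralRadius_smul, Complex.nnnorm_real]
  rfl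

theorem specRad_ne_top (M : Matrix ι ι ℝ) : specRad M ≠ ⊤ :=
  ne_top_of_le_ne_top (by simp [ENNReal.mul_ne_top])
    (spectrum.spectralRadius_le_pow_nnnorm_pow_one_div ℂ (M.map ((↑) : ℝ → ℂ)) 0)

end LinftyOpNorm

theorem ofReal_mul_le_specRad_sq {M : Matrix ι ι ℝ} (hM : ∀ i j, 0 ≤ M i j) (a b : ι) :
    ENNReal.ofReal (M a b * M b a) ≤ specRad M ^ 2 :=
  calc ENNReal.ofReal (M a b * M b a) ≤ ENNReal.ofReal ((M ^ 2) a a) := by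
        refine ENNReal.ofReal_le_ofReal ?_
        rw [sq, mul_apply]
        exact Finset.single_le_sum (f := fun l => M a l * M l a)
          (fun l _ => mul_nonneg (hM a l) (hM l a)) (Finset.mem_univ b)
    _ ≤ specRad (M ^ 2) := ofReal_apply_self_le_specRad (pow_apply_nonneg hM 2) a
    _ = specRad M ^ 2 := by
      rw [specRad, map_ofReal_pow, spectrum.spectralRadius_pow _ two_ne_zero]
      rfl

theorem toReal_specRad_le_mul {M N : Matrix ι ι ℝ} {c : ℝ} (hM : ∀ i j, 0 ≤ M i j) (hc : 0 ≤ c)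
    (hMN : ∀ i j, M i j ≤ c * N i j) : (specRad M).toReal ≤ c * (specRad N).toReal := by
  have h := specRad_le_specRad hM (N := c • N) (by simpa using hMN)
  rw [specRad_smul] at h
  simpa [ENNReal.toReal_mul, abs_of_nonneg hc] using
    ENNReal.toReal_mono (ENNReal.mul_ne_top ENNReal.coe_ne_top (specRad_ne_top N)) h

end Matrix

section SlopeBounds

variable {f : ℝ → ℝ} {t t' : ℝ}

theorem mul_abs_sub_le_abs_sub (hlo : ∀ x y, x ≤ y → t * (y - x) ≤ f y - f x) (x y : ℝ) :
    t * |y - x| ≤ |f y - f x| := by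
  rcases le_total x y with hxy | hyx
  · rw [abs_of_nonneg (sub_nonneg.2 hxy)]
    exact (hlo x y hxy).trans (le_abs_self _)
  · rw [abs_sub_comm, abs_of_nonneg (sub_nonneg.2 hyx), abs_sub_comm]
    exact (hlo y x hyx).trans (le_abs_self _)

theorem existsUnique_eq_of_slope_bounds (ht : 0 < t)
    (hlo : ∀ x y, x ≤ y → t * (y - x) ≤ f y - f x)
    (hup : ∀ x y, x ≤ y → f y - f x ≤ t' * (y - x)) (r : ℝ) : ∃! x, f x = r := by
  have hmono : StrictMono f := fun x y hxy => by nlinarith [hlo x y hxy.le]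
  have hlip : ∀ x y, x ≤ y → dist (f y) (f x) ≤ t' * dist y x := fun x y hxy => by
    rw [Real.dist_eq, Real.dist_eq, abs_of_nonneg (sub_nonneg.2 (hmono.monotone hxy)),
      abs_of_nonneg (sub_nonneg.2 hxy)]
    exact hup x y hxy
  have hcont : Continuous f := by
    refine (LipschitzWith.of_dist_le' (K := t') fun x y => ?_).continuous
    rcases le_total x y with hxy | hyx
    · rw [dist_comm (f x), dist_comm x]
      exact hlip x y hxy
    · exact hlip y x hyx
  have htop : Tendsto f atTop atTop :=
    tendsto_atTop_mono' _ ((eventually_ge_atTop 0).mono fun x hx => by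
        simp only [id]; linarith [hlo 0 x hx])
      (tendsto_atTop_add_const_left _ (f 0) (tendsto_id.const_mul_atTop ht))
  have hbot : Tendsto f atBot atBot :=
    tendsto_atBot_mono' _ ((eventually_le_atBot 0).mono fun x hx => by
        simp only [id]; linarith [hlo x 0 hx])
      (tendsto_atBot_add_const_left _ (f 0) (tendsto_id.const_mul_atBot ht))
  obtain ⟨x, hx⟩ := hcont.surjective htop hbot r
  exact ⟨x, hx, fun y hy => hmono.injective (hy.trans hx.symm)⟩

theorem abs_sub_le_of_slope_bound (ht : 0 < t) (hlo : ∀ x y, x ≤ y → t * (y - x) ≤ f y - f x)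
    {b b' r s : ℝ} (hb : f b = 0) (hb' : f b' = r + s * b') (hs : 2 * |s| ≤ t) :
    |b' - b| ≤ 2 * (|r| + |s| * |b|) / t := by
  have h1 := mul_abs_sub_le_abs_sub hlo b b'
  have h2 : |f b' - f b| ≤ |r| + |s| * |b| + |s| * |b' - b| := by
    rw [hb, hb', sub_zero, show r + s * b' = r + s * b + s * (b' - b) by ring]
    refine (abs_add_le _ _).trans ?_
    rw [abs_mul s (b' - b)]
    linarith [abs_add_le r (s * b), abs_mul s b]
  have h3 : |s| * |b' - b| ≤ t / 2 * |b' - b| :=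
    mul_le_mul_of_nonneg_right (by linarith) (abs_nonneg _)
  rw [le_div_iff₀ ht]
  linarith

theorem one_le_mul_of_slope_bounds (ht : 0 ≤ t) (hlo : ∀ x y, x ≤ y → t * (y - x) ≤ f y - f x)
    (hup : ∀ x y, x ≤ y → f y - f x ≤ t' * (y - x)) (h0 : f 0 ≤ -1) {b : ℝ} (hb : f b = 0) :
    1 ≤ t' * b := by
  have hb0 : 0 ≤ b := by
    by_contra! hneg
    nlinarith [hlo b 0 hneg.le]
  linarith [hup 0 b hb0]

end SlopeBounds

section TransferMatrix

variable {ι : Type*} (W : ι → ι → Prop) [DecidableRel W] (F T : ι → ι → ℝ)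

noncomputable def transferMatrix (β : ℝ) : Matrix ι ι ℝ :=
  Matrix.of fun i j => if W i j then Real.exp (-F i j + β * T i j) else 0

noncomputable def pressure [Fintype ι] [DecidableEq ι] (β : ℝ) : ℝ :=
  Real.log (specRad (transferMatrix W F T β)).toReal

variable {W F T}

theorem transferMatrix_apply (β : ℝ) (i j : ι) :
    transferMatrix W F T β i j = if W i j then Real.exp (-F i j + β * T i j) else 0 :=
  rfl

theorem transferMatrix_nonneg (β : ℝ) (i j : ι) : 0 ≤ transferMatrix W F T β i j := by
  rw [transferMatrix_apply]
  split_ifs <;> simp [Real.exp_nonneg]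

theorem transferMatrix_le_exp_mul {β β' c : ℝ}
    (h : ∀ i j, W i j → -F i j + β' * T i j ≤ c + (-F i j + β * T i j)) (i j : ι) :
    transferMatrix W F T β' i j ≤ Real.exp c * transferMatrix W F T β i j := by
  rw [transferMatrix_apply, transferMatrix_apply]
  split_ifs with hij
  · simpa [← Real.exp_add] using h i j hij
  · simp

variable [Fintype ι] [DecidableEq ι]

theorem toReal_specRad_transferMatrix_pos {a b : ι} (hab : W a b) (hba : W b a) (β : ℝ) :
    0 < (specRad (transferMatrix W F T β)).toReal := by
  have h := Matrix.ofReal_mul_le_specRad_sq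
    (transferMatrix_nonneg (W := W) (F := F) (T := T) β) a b
  rw [transferMatrix_apply, transferMatrix_apply, if_pos hab, if_pos hba] at h
  refine ENNReal.toReal_pos (fun h0 => ?_) (Matrix.specRad_ne_top _)
  rw [h0, zero_pow two_ne_zero, nonpos_iff_eq_zero, ENNReal.ofReal_eq_zero] at h
  exact (mul_pos (Real.exp_pos _) (Real.exp_pos _)).not_ge h

theorem exp_pressure {a b : ι} (hab : W a b) (hba : W b a) (β : ℝ) :
    Real.exp (pressure W F T β) = (specRad (transferMatrix W F T β)).toReal :=
  Real.exp_log (toReal_specRad_transferMatrix_pos hab hba β)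

theorem pressure_le_add {a b : ι} (hab : W a b) (hba : W b a) {β β' c : ℝ}
    (h : ∀ i j, W i j → -F i j + β' * T i j ≤ c + (-F i j + β * T i j)) :
    pressure W F T β' ≤ c + pressure W F T β := by
  rw [← Real.exp_le_exp, Real.exp_add, exp_pressure hab hba, exp_pressure hab hba]
  exact Matrix.toReal_specRad_le_mul (transferMatrix_nonneg β') (Real.exp_nonneg c)
    (transferMatrix_le_exp_mul h)

theorem pressure_slope_bounds {a b : ι} (hab : W a b) (hba : W b a) {t t' : ℝ}
    (hT : ∀ i j, W i j → t ≤ T i j ∧ T i j ≤ t') {β β' : ℝ} (hββ' : β ≤ β') :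
    t * (β' - β) ≤ pressure W F T β' - pressure W F T β ∧
      pressure W F T β' - pressure W F T β ≤ t' * (β' - β) := by
  constructor
  · have := pressure_le_add (F := F) (T := T) hab hba (β := β') (β' := β)
      (c := -(t * (β' - β))) fun i j hij => by nlinarith [(hT i j hij).1]
    linarith
  · have := pressure_le_add (F := F) (T := T) hab hba (β := β) (β' := β') (c := t' * (β' - β))
      fun i j hij => by nlinarith [(hT i j hij).2]
    linarith

theorem pressure_zero_le {a b : ι} (hab : W a b) (hba : W b a) {f : ℝ}
    (hF : ∀ i j, W i j → f ≤ F i j) :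
    pressure W F T 0 ≤ Real.log (Fintype.card ι) - f := by
  have : Nonempty ι := ⟨a⟩
  have hle :
      specRad (transferMatrix W F T 0) ≤ ENNReal.ofReal (Fintype.card ι * Real.exp (-f)) :=
    Matrix.specRad_le_card_mul (transferMatrix_nonneg 0) fun i j => by
      rw [transferMatrix_apply]
      split_ifs with hij
      · simpa using hF i j hij
      · exact Real.exp_nonneg _
  have h := ENNReal.toReal_mono ENNReal.ofReal_ne_top hle
  rw [ENNReal.toReal_ofReal (by positivity)] at h
  calc pressure W F T 0 ≤ Real.log (Fintype.card ι * Real.exp (-f)) :=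
        Real.log_le_log (toReal_specRad_transferMatrix_pos hab hba 0) h
    _ = Real.log (Fintype.card ι) - f := by
        rw [Real.log_mul (by simp) (Real.exp_ne_zero _), Real.log_exp, sub_eq_add_neg]

theorem specRad_exp_smul_transferMatrix_eq_one_iff {a b : ι} (hab : W a b) (hba : W b a)
    (u β : ℝ) :
    specRad (Real.exp u • transferMatrix W F T β) = 1 ↔ pressure W F T β = -u := by
  rw [← ENNReal.toReal_eq_one_iff, Matrix.specRad_smul, ENNReal.toReal_mul,
    ← exp_pressure hab hba]
  simp [← Real.exp_add, Real.exp_eq_one_iff, eq_neg_iff_add_eq_zero, add_comm]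

theorem transferMatrix_root_perturbation {a b : ι} (hab : W a b) (hba : W b a) {t t' : ℝ}
    (ht : 0 < t) (hT : ∀ i j, W i j → t ≤ T i j ∧ T i j ≤ t')
    (hF : ∀ i j, W i j → Real.log (Fintype.card ι) + 1 ≤ F i j) {r s ρ c : ℝ}
    (hs : 2 * |s| ≤ t) (hr : |r| ≤ ρ) (hc : 2 * (ρ * t' + |s|) ≤ c * t) :
    (∃! β, specRad (transferMatrix W F T β) = 1) ∧
      (∃! β, specRad (Real.exp (-(r + s * β)) • transferMatrix W F T β) = 1) ∧
      ∀ β β', specRad (transferMatrix W F T β) = 1 →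
        specRad (Real.exp (-(r + s * β')) • transferMatrix W F T β') = 1 → |β' - β| ≤ c * β := by
  have hlo : ∀ x y, x ≤ y → t * (y - x) ≤ pressure W F T y - pressure W F T x :=
    fun x y hxy => (pressure_slope_bounds hab hba hT hxy).1
  have hup : ∀ x y, x ≤ y → pressure W F T y - pressure W F T x ≤ t' * (y - x) :=
    fun x y hxy => (pressure_slope_bounds hab hba hT hxy).2
  have hiff : ∀ β, specRad (transferMatrix W F T β) = 1 ↔ pressure W F T β = 0 := fun β => by
    simpa using specRad_exp_smul_transferMatrix_eq_one_iff (F := F) (T := T) hab hba 0 β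
  have hiff' : ∀ β, specRad (Real.exp (-(r + s * β)) • transferMatrix W F T β) = 1 ↔
      pressure W F T β - s * β = r := fun β => by
    rw [specRad_exp_smul_transferMatrix_eq_one_iff hab hba, neg_neg]
    constructor <;> intro h <;> linarith
  have hs' : s ≤ t / 2 := by linarith [le_abs_self s]
  refine ⟨(existsUnique_congr hiff).2 (existsUnique_eq_of_slope_bounds ht hlo hup 0),
    (existsUnique_congr hiff').2 (existsUnique_eq_of_slope_bounds (t := t - s) (t' := t' - s)
      (by linarith) (fun x y hxy => by linarith [hlo x y hxy])
      (fun x y hxy => by linarith [hup x y hxy]) r), fun β β' hβ hβ' => ?_⟩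
  have hb := (hiff β).1 hβ
  have hb' : pressure W F T β' = r + s * β' := by linarith [(hiff' β').1 hβ']
  have h0 : pressure W F T 0 ≤ -1 := by linarith [pressure_zero_le (T := T) hab hba hF]
  -- `β ≥ 1 / t'` turns the additive error `2 |r| / t` into one relative to `β`.
  have hβt' := one_le_mul_of_slope_bounds ht.le hlo hup h0 hb
  have htt' : t ≤ t' := (hT a b hab).1.trans (hT a b hab).2
  have hβ0 : 0 ≤ β := by nlinarith
  have hρ : |r| ≤ ρ * (t' * β) := by nlinarith [abs_nonneg r]
  calc |β' - β| ≤ 2 * (|r| + |s| * |β|) / t := abs_sub_le_of_slope_bound ht hlo hb hb' hs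
    _ ≤ c * β := by
      rw [div_le_iff₀ ht, abs_of_nonneg hβ0]
      nlinarith [mul_le_mul_of_nonneg_right hc hβ0]

end TransferMatrix

theorem abs_log_one_sub_le {x : ℝ} (hx : |x| ≤ 1 / 2) : |Real.log (1 - x)| ≤ 2 * |x| := by
  have h := Real.abs_log_sub_add_sum_range_le (x := x) (by linarith) 0
  simp only [Finset.range_zero, Finset.sum_empty, zero_add, pow_one] at h
  refine h.trans ?_
  rw [div_le_iff₀ (by linarith)]
  nlinarith [abs_nonneg x]

theorem eventually_abs_mul_log_le (z : ℝ) {d : ℝ} (hd : 0 < d) :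
    ∀ᶠ E in atTop, |z * Real.log E| ≤ d * E := by
  filter_upwards [(Real.isLittleO_log_id_atTop.const_mul_left z).bound hd,
    eventually_ge_atTop 0] with E hE hE0
  simpa [abs_of_nonneg hE0] using hE

theorem rpow_three_halves {x : ℝ} (hx : 0 ≤ x) : x ^ ((3 : ℝ) / 2) = x * √x := by
  rw [show (3 : ℝ) / 2 = 1 + 1 / 2 by norm_num, Real.rpow_add' hx (by norm_num), Real.rpow_one,
    Real.sqrt_eq_rpow]

theorem rpow_neg_three_halves_mul_sqrt_le {E : ℝ} (hE : 0 < E) :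
    E ^ (-(3 : ℝ) / 2) * √(2 * E) ≤ 2 / E := by
  rw [neg_div, Real.rpow_neg hE.le, rpow_three_halves hE.le, Real.sqrt_mul zero_le_two,
    inv_mul_eq_div, mul_div_mul_right _ _ (Real.sqrt_pos.2 hE).ne']
  gcongr
  exact Real.sqrt_le_iff.2 ⟨zero_le_two, by norm_num⟩

theorem cos_angle_div_two_pos_of_ne_pi {V : Type*} [NormedAddCommGroup V]
    [InnerProductSpace ℝ V] {x y : V} (h : InnerProductGeometry.angle x y ≠ Real.pi) :
    0 < Real.cos (InnerProductGeometry.angle x y / 2) := by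
  have h0 := InnerProductGeometry.angle_nonneg x y
  have hπ := lt_of_le_of_ne (InnerProductGeometry.angle_le_pi x y) h
  exact Real.cos_pos_of_mem_Ioo ⟨by linarith [Real.pi_pos], by linarith⟩

section Molecule

variable {n : ℕ} {q : Fin n → E3} {Z : Fin n → ℝ}

theorem exists_pairDist_bounds [Nonempty (MolAlphabet n)] (hq : Function.Injective q) :
    ∃ dmin > 0, ∃ dmax > 0, ∀ i j, i ≠ j → dmin ≤ ‖q i - q j‖ ∧ ‖q i - q j‖ ≤ dmax := by
  have hpos : ∀ k : MolAlphabet n, 0 < ‖q k.1.1 - q k.1.2‖ :=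
    fun k => norm_pos_iff.2 (sub_ne_zero.2 (hq.ne k.2))
  obtain ⟨k, hk⟩ := Finite.exists_min fun k : MolAlphabet n => ‖q k.1.1 - q k.1.2‖
  obtain ⟨k', hk'⟩ := Finite.exists_max fun k : MolAlphabet n => ‖q k.1.1 - q k.1.2‖
  exact ⟨_, hpos k, _, hpos k', fun i j hij => ⟨hk ⟨(i, j), hij⟩, hk' ⟨(i, j), hij⟩⟩⟩

theorem molF_ne_zero (hq : Function.Injective q)
    (hgen : ∀ i j k : Fin n, i ≠ j → j ≠ k → i ≠ k →
      ¬ Collinear ℝ ({q i, q j, q k} : Set E3))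
    (hZ : ∀ i, Z i ≠ 0) {k₀ k₁ : MolAlphabet n} (h : Composable k₀ k₁) :
    molF q Z k₀ k₁ ≠ 0 := by
  obtain ⟨⟨i, j⟩, hij⟩ := k₀
  obtain ⟨⟨j', l⟩, hjl⟩ := k₁
  obtain rfl : j = j' := h
  have hsub : q i - q j ≠ 0 := sub_ne_zero.2 (hq.ne hij)
  have hangle : InnerProductGeometry.angle (q i - q j) (q l - q j) ≠ Real.pi := by
    by_cases hli : l = i
    · rw [hli, InnerProductGeometry.angle_self hsub]
      exact Real.pi_pos.ne
    · exact fun hπ =>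
        hgen i j l hij hjl (Ne.symm hli) (EuclideanGeometry.collinear_of_angle_eq_pi hπ)
  exact div_ne_zero (mul_ne_zero (mul_ne_zero two_ne_zero (norm_ne_zero_iff.2 hsub))
    (pow_ne_zero 2 (cos_angle_div_two_pos_of_ne_pi hangle).ne')) (neg_ne_zero.2 (hZ j))

theorem eventually_le_molFE (hq : Function.Injective q)
    (hgen : ∀ i j k : Fin n, i ≠ j → j ≠ k → i ≠ k →
      ¬ Collinear ℝ ({q i, q j, q k} : Set E3))
    (hZ : ∀ i, Z i ≠ 0) (c : ℝ) :
    ∀ᶠ E in atTop, ∀ k₀ k₁ : MolAlphabet n, Composable k₀ k₁ → c ≤ molFE q Z E k₀ k₁ := by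
  refine eventually_all.2 fun k₀ => eventually_all.2 fun k₁ => ?_
  by_cases h : Composable k₀ k₁
  · have hf := abs_pos.2 (molF_ne_zero hq hgen hZ h)
    have hd : 0 < ‖q k₀.1.1 - q k₀.1.2‖ := norm_pos_iff.2 (sub_ne_zero.2 (hq.ne k₀.2))
    have hlim : Tendsto (fun E => molFE q Z E k₀ k₁) atTop atTop :=
      (Real.tendsto_log_atTop.comp <| ((tendsto_id.const_mul_atTop two_pos).atTop_mul_const
        hf).atTop_div_const hd).const_mul_atTop two_pos
    exact (hlim.eventually_ge_atTop c).mono fun _ hE _ => hE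
  · exact Eventually.of_forall fun _ h' => absurd h' h

theorem molT_mem_Icc {dmin dmax E : ℝ}
    (hd : ∀ i j, i ≠ j → dmin ≤ ‖q i - q j‖ ∧ ‖q i - q j‖ ≤ dmax) (hE : 0 < E)
    {k₀ k₁ : MolAlphabet n} (hZE : |Z k₀.1.2 * Real.log E| ≤ dmin * E) (h : Composable k₀ k₁) :
    dmin / (2 * √(2 * E)) ≤ molT q Z E k₀ k₁ ∧ molT q Z E k₀ k₁ ≤ 2 * dmax / √(2 * E) := by
  unfold molT
  set s := √(2 * E)
  have hs : 0 < s := Real.sqrt_pos.2 (by positivity)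
  have h₀ := hd _ _ k₀.2
  have h₁ := hd k₀.1.2 k₁.1.2 (h ▸ k₁.2)
  have hcorr : |Z k₀.1.2 * Real.log E / (2 * E) ^ ((3 : ℝ) / 2)| ≤ dmin / (2 * s) := by
    rw [rpow_three_halves (by positivity), abs_div, abs_of_pos (by positivity : 0 < 2 * E * s),
      div_le_div_iff₀ (by positivity) (by positivity)]
    calc |Z k₀.1.2 * Real.log E| * (2 * s) ≤ dmin * E * (2 * s) := by gcongr
      _ = dmin * (2 * E * s) := by ring
  have hlo : dmin / s ≤ (‖q k₀.1.1 - q k₀.1.2‖ + ‖q k₀.1.2 - q k₁.1.2‖) / 2 / s := by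
    gcongr; linarith
  have hhi : (‖q k₀.1.1 - q k₀.1.2‖ + ‖q k₀.1.2 - q k₁.1.2‖) / 2 / s ≤ dmax / s := by
    gcongr; linarith
  have hmin : dmin / s = dmin / (2 * s) + dmin / (2 * s) := by field_simp; ring
  have hmax : dmin / (2 * s) ≤ dmax / s := by
    rw [div_le_div_iff₀ (by positivity) hs]
    nlinarith [(norm_nonneg _).trans h₀.2]
  have htwo : 2 * dmax / s = dmax / s + dmax / s := by ring
  constructor <;> linarith [abs_le.1 hcorr]

theorem molMp_eq_smul (C E β : ℝ) :
    molMp q Z C E β = Real.exp (-(2 * Real.log (1 + C * E ^ (-(1 : ℝ))) +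
      C * E ^ (-(3 : ℝ) / 2) * β)) • molM q Z E β := by
  ext k₀ k₁
  simp only [molMp, molM, Matrix.smul_apply, Matrix.of_apply, smul_eq_mul]
  split_ifs
  · rw [← Real.exp_add]; ring_nf
  · rw [mul_zero]

theorem molMm_eq_smul (C E β : ℝ) :
    molMm q Z C E β = Real.exp (-(2 * Real.log (1 - C * E ^ (-(1 : ℝ))) +
      -(C * E ^ (-(3 : ℝ) / 2)) * β)) • molM q Z E β := by
  ext k₀ k₁
  simp only [molMm, molM, Matrix.smul_apply, Matrix.of_apply, smul_eq_mul]
  split_ifs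
  · rw [← Real.exp_add]; ring_nf
  · rw [mul_zero]

theorem molM_roots_perturbation {a b : MolAlphabet n} (hab : Composable a b)
    (hba : Composable b a) {dmin dmax C E : ℝ} (hdmin : 0 < dmin)
    (hd : ∀ i j, i ≠ j → dmin ≤ ‖q i - q j‖ ∧ ‖q i - q j‖ ≤ dmax) (hC : 0 < C) (hE : 0 < E)
    (hCE : 2 * C ≤ E) (hCdE : 8 * C ≤ dmin * E) (hZE : ∀ j, |Z j * Real.log E| ≤ dmin * E)
    (hF : ∀ k₀ k₁, Composable k₀ k₁ →
      Real.log (Fintype.card (MolAlphabet n)) + 1 ≤ molFE q Z E k₀ k₁) :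
    ∃ bt bp bm : ℝ,
      (specRad (molM q Z E bt) = 1 ∧ ∀ β : ℝ, specRad (molM q Z E β) = 1 → β = bt) ∧
      (specRad (molMp q Z C E bp) = 1 ∧ ∀ β : ℝ, specRad (molMp q Z C E β) = 1 → β = bp) ∧
      (specRad (molMm q Z C E bm) = 1 ∧ ∀ β : ℝ, specRad (molMm q Z C E β) = 1 → β = bm) ∧
      |bp - bt| ≤ (32 * dmax + 8) * C / dmin * bt / E ∧
      |bm - bt| ≤ (32 * dmax + 8) * C / dmin * bt / E := by
  set s := √(2 * E)
  set δT := C * E ^ (-(3 : ℝ) / 2)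
  have hs : 0 < s := Real.sqrt_pos.2 (by positivity)
  have hδT : 0 ≤ δT := by positivity
  have hδTs : δT * s ≤ 2 * C / E :=
    calc δT * s = C * (E ^ (-(3 : ℝ) / 2) * √(2 * E)) := mul_assoc _ _ _
      _ ≤ C * (2 / E) := by gcongr; exact rpow_neg_three_halves_mul_sqrt_le hE
      _ = 2 * C / E := by ring
  have hδF : C * E ^ (-(1 : ℝ)) = C / E := by rw [Real.rpow_neg_one, div_eq_mul_inv]
  have hδF2 : C / E ≤ 1 / 2 := by rw [div_le_div_iff₀ hE two_pos]; linarith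
  have hT : ∀ k₀ k₁, Composable k₀ k₁ →
      dmin / (2 * s) ≤ molT q Z E k₀ k₁ ∧ molT q Z E k₀ k₁ ≤ 2 * dmax / s :=
    fun k₀ k₁ h => molT_mem_Icc hd hE (hZE _) h
  have hsmall : ∀ σ, |σ| = δT → 2 * |σ| ≤ dmin / (2 * s) := fun σ hσ => by
    rw [hσ, le_div_iff₀ (by positivity)]
    have : 8 * C / E ≤ dmin := by rw [div_le_iff₀ hE]; linarith
    linarith [show 8 * C / E = 4 * (2 * C / E) by ring]
  have hr : ∀ x, |x| = C / E → |2 * Real.log (1 - x)| ≤ 4 * (C / E) := fun x hx => by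
    rw [abs_mul, abs_two]
    linarith [abs_log_one_sub_le (hx.trans_le hδF2)]
  have hc : 2 * (4 * (C / E) * (2 * dmax / s) + δT) ≤
      (32 * dmax + 8) * C / dmin / E * (dmin / (2 * s)) := by
    have h2δT : 2 * δT ≤ 4 * (C / E) / s := by
      rw [le_div_iff₀ hs]; linarith [show 4 * (C / E) = 2 * (2 * C / E) by ring]
    have hrhs : (32 * dmax + 8) * C / dmin / E * (dmin / (2 * s)) =
        2 * (4 * (C / E) * (2 * dmax / s)) + 4 * (C / E) / s := by
      field_simp; ring
    linarith
  have hpert : ∀ x σ, |x| = C / E → |σ| = δT →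
      (∃! β, specRad (molM q Z E β) = 1) ∧
      (∃! β, specRad (Real.exp (-(2 * Real.log (1 + x) + σ * β)) • molM q Z E β) = 1) ∧
      ∀ β β', specRad (molM q Z E β) = 1 →
        specRad (Real.exp (-(2 * Real.log (1 + x) + σ * β')) • molM q Z E β') = 1 →
        |β' - β| ≤ (32 * dmax + 8) * C / dmin / E * β := fun x σ hx hσ =>
    transferMatrix_root_perturbation hab hba (by positivity) hT hF (hsmall σ hσ)
      (by simpa using hr (-x) (by rwa [abs_neg])) (by rwa [hσ])
  have hx : |C * E ^ (-(1 : ℝ))| = C / E := by rw [hδF, abs_of_pos (by positivity)]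
  obtain ⟨⟨bt, hbt, hbt_unique⟩, ⟨bp, hbp, hbp_unique⟩, hestp⟩ :=
    hpert _ δT hx (abs_of_nonneg hδT)
  obtain ⟨-, ⟨bm, hbm, hbm_unique⟩, hestm⟩ :=
    hpert (-(C * E ^ (-(1 : ℝ)))) (-δT) (by rwa [abs_neg]) (by rw [abs_neg, abs_of_nonneg hδT])
  simp only [molMp_eq_smul, molMm_eq_smul, sub_eq_add_neg]
  refine ⟨bt, bp, bm, ⟨hbt, hbt_unique⟩, ⟨hbp, hbp_unique⟩, ⟨hbm, hbm_unique⟩,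
    (hestp bt bp hbt hbp).trans_eq (by ring), (hestm bt bm hbt hbm).trans_eq (by ring)⟩

theorem eventually_molM_roots (hq : Function.Injective q)
    (hgen : ∀ i j k : Fin n, i ≠ j → j ≠ k → i ≠ k →
      ¬ Collinear ℝ ({q i, q j, q k} : Set E3))
    (hZ : ∀ i, Z i ≠ 0) {a b : MolAlphabet n} (hab : Composable a b) (hba : Composable b a)
    {dmin dmax C : ℝ} (hdmin : 0 < dmin)
    (hd : ∀ i j, i ≠ j → dmin ≤ ‖q i - q j‖ ∧ ‖q i - q j‖ ≤ dmax) (hC : 0 < C) :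
    ∀ᶠ E in atTop, ∃ bt bp bm : ℝ,
      (specRad (molM q Z E bt) = 1 ∧ ∀ β : ℝ, specRad (molM q Z E β) = 1 → β = bt) ∧
      (specRad (molMp q Z C E bp) = 1 ∧ ∀ β : ℝ, specRad (molMp q Z C E β) = 1 → β = bp) ∧
      (specRad (molMm q Z C E bm) = 1 ∧ ∀ β : ℝ, specRad (molMm q Z C E β) = 1 → β = bm) ∧
      |bp - bt| ≤ (32 * dmax + 8) * C / dmin * bt / E ∧
      |bm - bt| ≤ (32 * dmax + 8) * C / dmin * bt / E := by
  filter_upwards [eventually_gt_atTop 0, eventually_ge_atTop (2 * C),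
    (tendsto_id.const_mul_atTop hdmin).eventually_ge_atTop (8 * C),
    eventually_all.2 fun j => eventually_abs_mul_log_le (Z j) hdmin,
    eventually_le_molFE hq hgen hZ _] with E hE hCE hCdE hZE hF
  exact molM_roots_perturbation hab hba hdmin hd hC hE hCE hCdE hZE hF

end Molecule

theorem stmt6 (n : ℕ) (hn : 2 ≤ n) (q : Fin n → E3) (Z : Fin n → ℝ)
    (hq : Function.Injective q)
    (hgen : ∀ i j k : Fin n, i ≠ j → j ≠ k → i ≠ k →
      ¬ Collinear ℝ ({q i, q j, q k} : Set E3))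
    (hZ : ∀ i, Z i ≠ 0) :
    ∀ C > (0 : ℝ), ∃ E₀ > (0 : ℝ), ∃ C' > (0 : ℝ), ∃ βt βp βm : ℝ → ℝ,
      ∀ E > E₀,
        (specRad (molM q Z E (βt E)) = 1 ∧
          ∀ β : ℝ, specRad (molM q Z E β) = 1 → β = βt E) ∧
        (specRad (molMp q Z C E (βp E)) = 1 ∧
          ∀ β : ℝ, specRad (molMp q Z C E β) = 1 → β = βp E) ∧
        (specRad (molMm q Z C E (βm E)) = 1 ∧
          ∀ β : ℝ, specRad (molMm q Z C E β) = 1 → β = βm E) ∧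
        |βp E - βt E| ≤ C' * βt E / E ∧
        |βm E - βt E| ≤ C' * βt E / E := by
  intro C hC
  have h01 : (⟨0, by omega⟩ : Fin n) ≠ ⟨1, by omega⟩ := by simp
  let a : MolAlphabet n := ⟨(_, _), h01⟩
  let b : MolAlphabet n := ⟨(_, _), h01.symm⟩
  have : Nonempty (MolAlphabet n) := ⟨a⟩
  obtain ⟨dmin, hdmin, dmax, hdmax, hd⟩ := exists_pairDist_bounds hq
  obtain ⟨E₁, hE₁⟩ := eventually_atTop.1
    (eventually_molM_roots hq hgen hZ (a := a) (b := b) rfl rfl hdmin hd hC)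
  choose! βt βp βm hβ using fun E (hE : max E₁ 1 < E) => hE₁ E ((le_max_left _ _).trans hE.le)
  exact ⟨max E₁ 1, by positivity, _, by positivity, βt, βp, βm, hβ⟩
end

section
/- For every energy threshold E_th > 0 there exists a virial radius R_vir ≥ R_0 such that for all E ≥ E_th and all q ∈ ℝ³ with ‖q‖ ≥ R_vir, the virial inequality 2·(E − V(q)) + ⟨q, ∇V(q)⟩ ≥ E holds. -/
/-! Since `V → 0` at infinity, `2 V(q) ≤ E_th / 2` for large `‖q‖`. The radial part
`Z_∞ q / ‖q‖³` of the gradient contributes `Z_∞ / ‖q‖` to `⟨q, ∇V(q)⟩` and the remainder at most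
`C₁ R₀ / ‖q‖` in absolute value, so `⟨q, ∇V(q)⟩ ≥ -E_th / 2` for large `‖q‖` as well; hence
`2 (E - V(q)) + ⟨q, ∇V(q)⟩ ≥ 2E - E_th ≥ E`. -/

open Filter Bornology
open scoped RealInnerProductSpace

section AsymptoticallyCoulomb

variable {F : Type*} [NormedAddCommGroup F] [InnerProductSpace ℝ F]

lemma neg_div_norm_le_inner_of_norm_sub_radial_le {q g : F} {Z B : ℝ} (hq : q ≠ 0)
    (h : ‖g - (Z / ‖q‖ ^ 3) • q‖ ≤ B / ‖q‖ ^ 2) :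
    -((B + |Z|) / ‖q‖) ≤ ⟪q, g⟫ := by
  have hq' : 0 < ‖q‖ := norm_pos_iff.2 hq
  have hsplit : ⟪q, g⟫ = ⟪q, g - (Z / ‖q‖ ^ 3) • q⟫ + Z / ‖q‖ := by
    rw [inner_sub_right, real_inner_smul_right, real_inner_self_eq_norm_sq]
    field_simp
    ring
  have hrem : -(B / ‖q‖) ≤ ⟪q, g - (Z / ‖q‖ ^ 3) • q⟫ :=
    calc -(B / ‖q‖) = -(‖q‖ * (B / ‖q‖ ^ 2)) := by field_simp
      _ ≤ -(‖q‖ * ‖g - (Z / ‖q‖ ^ 3) • q‖) := by gcongr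
      _ ≤ ⟪q, g - (Z / ‖q‖ ^ 3) • q⟫ := neg_le_of_abs_le (abs_real_inner_le_norm _ _)
  have hrad : -(|Z| / ‖q‖) ≤ Z / ‖q‖ := by
    rw [← neg_div]
    gcongr
    exact neg_abs_le Z
  rw [hsplit, add_div, neg_add]
  linarith

lemma div_rpow_le_div_sq {A x ε : ℝ} (hA : 0 ≤ A) (hx : 1 ≤ x) (hε : 0 ≤ ε) :
    A / x ^ (2 + ε) ≤ A / x ^ 2 := by
  rw [← Real.rpow_two]
  gcongr
  linarith

lemma eventually_neg_le_inner_of_norm_sub_radial_le {g : F → F} {Z ε C R₀ δ : ℝ}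
    (hε : 0 ≤ ε) (hCR : 0 ≤ C * R₀)
    (hg : ∀ q : F, R₀ ≤ ‖q‖ → ‖g q - (Z / ‖q‖ ^ 3) • q‖ ≤ C * R₀ / ‖q‖ ^ (2 + ε))
    (hδ : 0 < δ) :
    ∀ᶠ q in cobounded F, -δ ≤ ⟪q, g q⟫ := by
  have hdecay : ∀ᶠ q in cobounded F, (C * R₀ + |Z|) / ‖q‖ < δ :=
    (tendsto_const_nhds.div_atTop tendsto_norm_cobounded_atTop).eventually (gt_mem_nhds hδ)
  filter_upwards [eventually_cobounded_le_norm (max R₀ 1), hdecay] with q hq hsmall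
  have hq1 : 1 ≤ ‖q‖ := (le_max_right _ _).trans hq
  have hbound := neg_div_norm_le_inner_of_norm_sub_radial_le (norm_pos_iff.1 (by linarith))
    ((hg q ((le_max_left _ _).trans hq)).trans (div_rpow_le_div_sq hCR hq1 hε))
  linarith

end AsymptoticallyCoulomb

theorem stmt8_general
    (V : EuclideanSpace ℝ (Fin 3) → ℝ)
    (Zinf ε C₁ R₀ : ℝ) (hε : 0 < ε ∧ ε ≤ 1) (hC₁ : 0 < C₁) (hR₀ : 0 < R₀)
    (hV0 : Filter.Tendsto V (Filter.cocompact (EuclideanSpace ℝ (Fin 3))) (nhds 0))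
    (hgrad : ∀ q : EuclideanSpace ℝ (Fin 3), R₀ ≤ ‖q‖ →
      ‖gradient V q - (Zinf / ‖q‖ ^ 3) • q‖ ≤ C₁ * R₀ / ‖q‖ ^ (2 + ε)) :
    ∀ Eth > (0 : ℝ), ∃ Rvir ≥ R₀, ∀ E ≥ Eth, ∀ q : EuclideanSpace ℝ (Fin 3),
      Rvir ≤ ‖q‖ → E ≤ 2 * (E - V q) + (inner ℝ q (gradient V q) : ℝ) := by
  intro Eth hEth
  have hV : ∀ᶠ q in cobounded _, V q < Eth / 4 := by
    rw [Metric.cobounded_eq_cocompact]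
    exact hV0.eventually (gt_mem_nhds (by positivity))
  have hinner := eventually_neg_le_inner_of_norm_sub_radial_le hε.1.le
    (mul_nonneg hC₁.le hR₀.le) hgrad (half_pos hEth)
  obtain ⟨R, -, hR⟩ := hasBasis_cobounded_norm.eventually_iff.1 (hV.and hinner)
  refine ⟨max R R₀, le_max_right _ _, fun E hE q hq => ?_⟩
  obtain ⟨hVq, hinner_q⟩ := hR ((le_max_left _ _).trans hq)
  linarith

theorem stmt8
    (V : EuclideanSpace ℝ (Fin 3) → ℝ) (S : Set (EuclideanSpace ℝ (Fin 3)))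
    (hSfin : S.Finite)
    (Zinf ε C₁ R₀ : ℝ) (hε : 0 < ε ∧ ε ≤ 1) (hC₁ : 0 < C₁) (hR₀ : 0 < R₀)
    (hSball : ∀ s ∈ S, ‖s‖ < R₀ / 2)
    (hdiff : ∀ q ∉ S, ContDiffAt ℝ 1 V q)
    (hV0 : Filter.Tendsto V (Filter.cocompact (EuclideanSpace ℝ (Fin 3))) (nhds 0))
    (hgrad : ∀ q : EuclideanSpace ℝ (Fin 3), R₀ ≤ ‖q‖ →
      ‖gradient V q - (Zinf / ‖q‖ ^ 3) • q‖ ≤ C₁ * R₀ / ‖q‖ ^ (2 + ε)) :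
    ∀ Eth > (0 : ℝ), ∃ Rvir ≥ R₀, ∀ E ≥ Eth, ∀ q : EuclideanSpace ℝ (Fin 3),
      Rvir ≤ ‖q‖ → E ≤ 2 * (E - V q) + (inner ℝ q (gradient V q) : ℝ) :=
  stmt8_general V Zinf ε C₁ R₀ hε hC₁ hR₀ hV0 hgrad
end

section
/- For every c > 0 there exist C' > 0 and E_0 ≥ 1 such that for all E ≥ E_0 the following holds: if w¹ = (y¹, z¹) and w² = (y², z²) in ℝ² × ℝ² ≅ ℝ⁴ are orthonormal vectors each lying in the cone {(y,z) : ‖y − z‖ ≤ (c/E)·‖y + z‖}, then the Jacobian of the projection to the z-plane satisfies |√(‖z¹‖²·‖z²‖² − ⟨z¹, z²⟩²) − 1/2| ≤ C'/E. In particular, along the way: |‖z^i‖² − 1/2| ≤ c/E for i = 1,2, ⟨y¹, y²⟩ = −⟨z¹, z²⟩, and |⟨z¹, z²⟩| = O(1/E). -/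
/-!
Write `d = y - z`. For a unit vector `(y, z)` in the cone `‖y - z‖ ≤ ε ‖y + z‖` the parallelogram
law gives `‖y + z‖² ≤ 2`, so `‖d‖ = O(ε)`, and `‖y‖² - ‖z‖² = ⟪d, y + z⟫ = O(ε)` forces
`‖z‖² = 1/2 + O(ε)`. Substituting `y = z + d` into `⟪y¹, y²⟫ + ⟪z¹, z²⟫ = 0` shows that
`⟪z¹, z²⟫ = O(ε)`, hence the Gram determinant `‖z¹‖²‖z²‖² - ⟪z¹, z²⟫²` is `1/4 + O(ε)` and its
square root is `1/2 + O(ε)`. Take `ε = c/E` with `E ≥ max 1 c`, so that `ε ≤ 1`.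
-/

open RealInnerProductSpace

theorem Real.abs_sqrt_sub_sqrt_le (x : ℝ) {a : ℝ} (ha : 0 < a) :
    |√x - √a| ≤ |x - a| / √a := by
  have hsa : 0 < √a := Real.sqrt_pos.mpr ha
  rw [le_div_iff₀ hsa]
  rcases le_or_gt x 0 with hx | hx
  · rw [Real.sqrt_eq_zero_of_nonpos hx, zero_sub, abs_neg, abs_of_pos hsa,
      Real.mul_self_sqrt ha.le, abs_of_nonpos (by linarith)]
    linarith
  · calc |√x - √a| * √a ≤ |√x - √a| * (√x + √a) := by
          gcongr; linarith [Real.sqrt_nonneg x]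
      _ = |x - a| := by
          rw [← abs_of_nonneg (by positivity : 0 ≤ √x + √a), ← abs_mul]
          congr 1
          linear_combination Real.mul_self_sqrt hx.le - Real.mul_self_sqrt ha.le

theorem Real.abs_sqrt_sub_half_le (x : ℝ) : |√x - 1 / 2| ≤ 2 * |x - 1 / 4| := by
  have h : √(1 / 4 : ℝ) = 1 / 2 := by
    rw [Real.sqrt_eq_iff_mul_self_eq] <;> norm_num
  calc |√x - 1 / 2| ≤ |x - 1 / 4| / (1 / 2) :=
        h ▸ Real.abs_sqrt_sub_sqrt_le x (a := 1 / 4) (by norm_num)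
    _ = 2 * |x - 1 / 4| := by ring

section Cone

variable {F : Type*} [NormedAddCommGroup F] [InnerProductSpace ℝ F] {y z y' z' : F} {ε : ℝ}

theorem norm_add_sq_le_two_of_norm_sq_add_norm_sq_eq_one (h : ‖y‖ ^ 2 + ‖z‖ ^ 2 = 1) :
    ‖y + z‖ ^ 2 ≤ 2 := by
  nlinarith [parallelogram_law_with_norm ℝ y z, sq_nonneg ‖y - z‖]

theorem norm_sub_le_two_mul_of_mem_cone (h : ‖y‖ ^ 2 + ‖z‖ ^ 2 = 1) (hε : 0 ≤ ε)
    (hcone : ‖y - z‖ ≤ ε * ‖y + z‖) : ‖y - z‖ ≤ 2 * ε := by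
  have : ‖y + z‖ ≤ 2 := by
    nlinarith [norm_add_sq_le_two_of_norm_sq_add_norm_sq_eq_one h, norm_nonneg (y + z)]
  nlinarith

theorem abs_norm_sq_sub_half_le_of_mem_cone (h : ‖y‖ ^ 2 + ‖z‖ ^ 2 = 1) (hε : 0 ≤ ε)
    (hcone : ‖y - z‖ ≤ ε * ‖y + z‖) : |‖z‖ ^ 2 - 1 / 2| ≤ ε := by
  have hdiff : ⟪y - z, y + z⟫ = ‖y‖ ^ 2 - ‖z‖ ^ 2 := by
    simp only [inner_sub_left, inner_add_right, real_inner_self_eq_norm_sq, real_inner_comm z y]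
    ring
  have hcs : |‖y‖ ^ 2 - ‖z‖ ^ 2| ≤ ε * ‖y + z‖ ^ 2 := by
    calc |‖y‖ ^ 2 - ‖z‖ ^ 2| ≤ ‖y - z‖ * ‖y + z‖ := hdiff ▸ abs_real_inner_le_norm _ _
      _ ≤ ε * ‖y + z‖ * ‖y + z‖ := by gcongr
      _ = ε * ‖y + z‖ ^ 2 := by ring
  have := norm_add_sq_le_two_of_norm_sq_add_norm_sq_eq_one h
  rw [abs_le] at hcs ⊢
  constructor <;> nlinarith

theorem abs_inner_le_of_mem_cone (h : ‖y‖ ^ 2 + ‖z‖ ^ 2 = 1) (h' : ‖y'‖ ^ 2 + ‖z'‖ ^ 2 = 1)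
    (horth : ⟪y, y'⟫ + ⟪z, z'⟫ = 0) (hε : 0 ≤ ε) (hε₁ : ε ≤ 1)
    (hcone : ‖y - z‖ ≤ ε * ‖y + z‖) (hcone' : ‖y' - z'‖ ≤ ε * ‖y' + z'‖) :
    |⟪z, z'⟫| ≤ 4 * ε := by
  set d := y - z
  set d' := y' - z'
  have hd : ‖d‖ ≤ 2 * ε := norm_sub_le_two_mul_of_mem_cone h hε hcone
  have hd' : ‖d'‖ ≤ 2 * ε := norm_sub_le_two_mul_of_mem_cone h' hε hcone'
  have hz : ‖z‖ ≤ 1 := by nlinarith [norm_nonneg y, norm_nonneg z]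
  have hz' : ‖z'‖ ≤ 1 := by nlinarith [norm_nonneg y', norm_nonneg z']
  have hexpand : 2 * ⟪z, z'⟫ = -(⟪z, d'⟫ + ⟪d, z'⟫ + ⟪d, d'⟫) := by
    simp only [d, d', inner_sub_left, inner_sub_right] at horth ⊢
    linarith
  have h₁ : |⟪z, d'⟫| ≤ 2 * ε :=
    (abs_real_inner_le_norm _ _).trans (by nlinarith [norm_nonneg z, norm_nonneg d'])
  have h₂ : |⟪d, z'⟫| ≤ 2 * ε :=
    (abs_real_inner_le_norm _ _).trans (by nlinarith [norm_nonneg d, norm_nonneg z'])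
  have h₃ : |⟪d, d'⟫| ≤ 4 * ε :=
    (abs_real_inner_le_norm _ _).trans (by nlinarith [norm_nonneg d, norm_nonneg d'])
  have : |2 * ⟪z, z'⟫| ≤ 8 * ε := by
    rw [hexpand, abs_neg]
    linarith [abs_add_three ⟪z, d'⟫ ⟪d, z'⟫ ⟪d, d'⟫]
  rw [abs_mul, abs_two] at this
  linarith

end Cone

theorem abs_sqrt_mul_sub_sq_sub_half_le {a b p ε : ℝ} (hε : 0 ≤ ε) (hε₁ : ε ≤ 1)
    (ha : |a - 1 / 2| ≤ ε) (hb : |b - 1 / 2| ≤ ε) (hp : |p| ≤ 4 * ε) :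
    |√(a * b - p ^ 2) - 1 / 2| ≤ 36 * ε := by
  have hab : |a * b - 1 / 4| ≤ 2 * ε := by
    have : a * b - 1 / 4 = (a - 1 / 2) * (b - 1 / 2) + (a - 1 / 2) / 2 + (b - 1 / 2) / 2 := by ring
    rw [this]
    have : |(a - 1 / 2) * (b - 1 / 2)| ≤ ε := by
      rw [abs_mul]; nlinarith [abs_nonneg (a - 1 / 2), abs_nonneg (b - 1 / 2)]
    calc _ ≤ |(a - 1 / 2) * (b - 1 / 2)| + |(a - 1 / 2) / 2| + |(b - 1 / 2) / 2| :=
          abs_add_three _ _ _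
      _ ≤ 2 * ε := by rw [abs_div, abs_div, abs_two]; linarith
  have hp2 : p ^ 2 ≤ 16 * ε := by
    rw [← sq_abs]; nlinarith [abs_nonneg p]
  calc |√(a * b - p ^ 2) - 1 / 2| ≤ 2 * |a * b - p ^ 2 - 1 / 4| := Real.abs_sqrt_sub_half_le _
    _ ≤ 2 * (|a * b - 1 / 4| + |p ^ 2|) := by
        gcongr
        rw [show a * b - p ^ 2 - 1 / 4 = (a * b - 1 / 4) - p ^ 2 by ring]
        exact abs_sub _ _
    _ ≤ 36 * ε := by rw [abs_of_nonneg (sq_nonneg p)]; linarith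

theorem stmt10 :
    ∀ c > (0 : ℝ), ∃ C' > (0 : ℝ), ∃ E₀ : ℝ, 1 ≤ E₀ ∧
      ∀ E ≥ E₀, ∀ y1 z1 y2 z2 : EuclideanSpace ℝ (Fin 2),
        -- w¹ = (y¹,z¹) and w² = (y²,z²) are orthonormal in ℝ⁴
        ‖y1‖ ^ 2 + ‖z1‖ ^ 2 = 1 →
        ‖y2‖ ^ 2 + ‖z2‖ ^ 2 = 1 →
        (inner ℝ y1 y2 : ℝ) + (inner ℝ z1 z2 : ℝ) = 0 →
        -- both lie in the cone
        ‖y1 - z1‖ ≤ (c / E) * ‖y1 + z1‖ →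
        ‖y2 - z2‖ ≤ (c / E) * ‖y2 + z2‖ →
        -- the Jacobian of the projection to the z-plane is 1/2 + O(1/E)
        |Real.sqrt (‖z1‖ ^ 2 * ‖z2‖ ^ 2 - (inner ℝ z1 z2 : ℝ) ^ 2) - 1 / 2| ≤ C' / E ∧
        -- intermediate estimates
        |‖z1‖ ^ 2 - 1 / 2| ≤ c / E ∧
        |‖z2‖ ^ 2 - 1 / 2| ≤ c / E ∧
        (inner ℝ y1 y2 : ℝ) = -(inner ℝ z1 z2 : ℝ) ∧
        |(inner ℝ z1 z2 : ℝ)| ≤ C' / E := by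
  intro c hc
  refine ⟨36 * c, by positivity, max 1 c, le_max_left 1 c, ?_⟩
  intro E hE y1 z1 y2 z2 h1 h2 horth hcone1 hcone2
  have hE₀ : 0 < E := one_pos.trans_le ((le_max_left 1 c).trans hE)
  have hε : 0 ≤ c / E := by positivity
  have hε₁ : c / E ≤ 1 := (div_le_one hE₀).mpr ((le_max_right 1 c).trans hE)
  have hz1 := abs_norm_sq_sub_half_le_of_mem_cone h1 hε hcone1
  have hz2 := abs_norm_sq_sub_half_le_of_mem_cone h2 hε hcone2
  have hp := abs_inner_le_of_mem_cone h1 h2 horth hε hε₁ hcone1 hcone2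
  have hC' : 36 * c / E = 36 * (c / E) := mul_div_assoc _ _ _
  refine ⟨?_, hz1, hz2, by linarith, ?_⟩
  · rw [hC']
    exact abs_sqrt_mul_sub_sq_sub_half_le hε hε₁ hz1 hz2 hp
  · rw [hC']
    linarith
end

section
/- Let A be a nonempty finite type and let M : ℝ → Matrix A A ℝ, λ : ℝ → ℝ, v^l : ℝ → (A → ℝ), v^r : ℝ → (A → ℝ) all be differentiable at β_0, and suppose that for all β in a neighbourhood of β_0 one has the left and right eigenvector relations M(β)·v^r(β) = λ(β)·v^r(β) and (v^l(β))ᵀ·M(β) = λ(β)·(v^l(β))ᵀ, together with the normalization ⟨v^l(β), v^r(β)⟩ = 1. Then the derivative of the eigenvalue is given by the first-order perturbation formula λ'(β_0) = ⟨v^l(β_0), M'(β_0)·v^r(β_0)⟩, where M'(β_0) is the entrywise derivative of M at β_0 and ⟨u, w⟩ = Σ_{a ∈ A} u(a)·w(a). -/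
/-! On a neighbourhood of `β₀` the eigenvalue is the bilinear expression `λ = ⟨vˡ, M vʳ⟩`.
Differentiating it by the product rule gives
`λ' = ⟨vˡ', M vʳ⟩ + ⟨vˡ, M' vʳ⟩ + ⟨vˡ, M vʳ'⟩ = λ (⟨vˡ', vʳ⟩ + ⟨vˡ, vʳ'⟩) + ⟨vˡ, M' vʳ⟩`,
using the right eigenvector relation in the first term and the left one in the last; the
bracket is the derivative of the normalization `⟨vˡ, vʳ⟩ = 1`, hence vanishes. -/

open Matrix

section EntrywiseDerivatives

variable {𝕜 : Type*} [NontriviallyNormedField 𝕜] {m n : Type*} [Fintype n] {x : 𝕜}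

theorem hasDerivAt_dotProduct {u w : 𝕜 → n → 𝕜} {u' w' : n → 𝕜}
    (hu : ∀ i, HasDerivAt (fun y => u y i) (u' i) x)
    (hw : ∀ i, HasDerivAt (fun y => w y i) (w' i) x) :
    HasDerivAt (fun y => u y ⬝ᵥ w y) (u' ⬝ᵥ w x + u x ⬝ᵥ w') x := by
  have h := HasDerivAt.fun_sum (u := Finset.univ) fun i _ => (hu i).fun_mul (hw i)
  simpa only [dotProduct, Finset.sum_add_distrib] using h

theorem hasDerivAt_mulVec_apply {M : 𝕜 → Matrix m n 𝕜} {M' : Matrix m n 𝕜}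
    {v : 𝕜 → n → 𝕜} {v' : n → 𝕜}
    (hM : ∀ i j, HasDerivAt (fun y => M y i j) (M' i j) x)
    (hv : ∀ j, HasDerivAt (fun y => v y j) (v' j) x) (i : m) :
    HasDerivAt (fun y => (M y *ᵥ v y) i) ((M' *ᵥ v x + M x *ᵥ v') i) x :=
  hasDerivAt_dotProduct (hM i) hv

end EntrywiseDerivatives

theorem dotProduct_mulVec_eq_of_mulVec_eq_smul {n R : Type*} [Fintype n] [CommSemiring R]
    {M : Matrix n n R} {l r : n → R} {μ : R} (hr : M *ᵥ r = μ • r) (hlr : l ⬝ᵥ r = 1) :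
    l ⬝ᵥ (M *ᵥ r) = μ := by
  rw [hr, dotProduct_smul, hlr, smul_eq_mul, mul_one]

theorem stmt13_general {A : Type*} [Fintype A]
    (M : ℝ → Matrix A A ℝ) (lam : ℝ → ℝ) (vl vr : ℝ → (A → ℝ)) (β₀ : ℝ)
    (M' : Matrix A A ℝ) (lam' : ℝ) (vl' vr' : A → ℝ)
    (hM : ∀ a b, HasDerivAt (fun β => M β a b) (M' a b) β₀)
    (hlam : HasDerivAt lam lam' β₀)
    (hvl : ∀ a, HasDerivAt (fun β => vl β a) (vl' a) β₀)
    (hvr : ∀ a, HasDerivAt (fun β => vr β a) (vr' a) β₀)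
    (heig : ∀ᶠ β in nhds β₀,
      (M β).mulVec (vr β) = lam β • vr β ∧
      Matrix.vecMul (vl β) (M β) = lam β • vl β ∧
      ∑ a, vl β a * vr β a = 1) :
    lam' = ∑ a, vl β₀ a * (M'.mulVec (vr β₀)) a := by
  obtain ⟨hr₀, hl₀, -⟩ := heig.self_of_nhds
  have hnorm : vl' ⬝ᵥ vr β₀ + vl β₀ ⬝ᵥ vr' = 0 :=
    (hasDerivAt_dotProduct hvl hvr).unique <|
      (hasDerivAt_const β₀ (1 : ℝ)).congr_of_eventuallyEq <| heig.mono fun _ hβ => hβ.2.2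
  have hlam_eq : (fun β => vl β ⬝ᵥ (M β *ᵥ vr β)) =ᶠ[nhds β₀] lam :=
    heig.mono fun _ hβ => dotProduct_mulVec_eq_of_mulVec_eq_smul hβ.1 hβ.2.2
  have hderiv := (hlam.congr_of_eventuallyEq hlam_eq).unique
    (hasDerivAt_dotProduct hvl (hasDerivAt_mulVec_apply hM hvr))
  calc lam' = vl' ⬝ᵥ (M β₀ *ᵥ vr β₀) + vl β₀ ⬝ᵥ (M' *ᵥ vr β₀ + M β₀ *ᵥ vr') := hderiv
    _ = lam β₀ * (vl' ⬝ᵥ vr β₀ + vl β₀ ⬝ᵥ vr') + vl β₀ ⬝ᵥ (M' *ᵥ vr β₀) := by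
      rw [dotProduct_add, dotProduct_mulVec (vl β₀) (M β₀) vr', hr₀, hl₀, dotProduct_smul,
        smul_dotProduct, smul_eq_mul, smul_eq_mul]
      ring
    _ = vl β₀ ⬝ᵥ (M' *ᵥ vr β₀) := by rw [hnorm, mul_zero, zero_add]

theorem stmt13 {A : Type*} [Fintype A] [Nonempty A] [DecidableEq A]
    (M : ℝ → Matrix A A ℝ) (lam : ℝ → ℝ) (vl vr : ℝ → (A → ℝ)) (β₀ : ℝ)
    (M' : Matrix A A ℝ) (lam' : ℝ) (vl' vr' : A → ℝ)
    (hM : ∀ a b, HasDerivAt (fun β => M β a b) (M' a b) β₀)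
    (hlam : HasDerivAt lam lam' β₀)
    (hvl : ∀ a, HasDerivAt (fun β => vl β a) (vl' a) β₀)
    (hvr : ∀ a, HasDerivAt (fun β => vr β a) (vr' a) β₀)
    (heig : ∀ᶠ β in nhds β₀,
      (M β).mulVec (vr β) = lam β • vr β ∧
      Matrix.vecMul (vl β) (M β) = lam β • vl β ∧
      ∑ a, vl β a * vr β a = 1) :
    lam' = ∑ a, vl β₀ a * (M'.mulVec (vr β₀)) a :=
  stmt13_general M lam vl vr β₀ M' lam' vl' vr' hM hlam hvl hvr heig
end
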